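/- Let 0 ≤ θ₀ ≤ 1/2, θ₀ < θ ≤ 1, m > 1, let a ≥ 0 be measurable on (0,∞), and let the symmetric measurable kernel k satisfy hypothesis (K1) with constant k_*. Then for every r ∈ (1, m] and every nonnegative measurable ψ: ∫₀¹∫₁^∞ [w_r(x+y) − w_r(x) − w_r(y)]·k(x,y)ψ(x)ψ(y) dy dx ≤ 2^{r+2}·k_*·M₁(ψ)·∫₁^∞ y^r (1+a(y))^θ ψ(y) dy. -/

import Mathlib

open MeasureTheory Set Real
open scoped ENNReal

/-- The weight `ℓ`: `ℓ(x) = x^(1-2θ₀)` for `x ∈ (0,1)` and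
`ℓ(x) = (1+a(x))^θ · x^m` for `x > 1`. -/
noncomputable def ell (a : ℝ → ℝ) (θ₀ θ m : ℝ) (x : ℝ) : ℝ :=
  if x < 1 then x ^ (1 - 2 * θ₀) else (1 + a x) ^ θ * x ^ m

/-- The weight `w_r`: `w_r(x) = ((r−1)/2)x³` on `[0,1]` and
`w_r(x) = x^r + ((r−3)/2)x` for `x > 1`. -/
noncomputable def wgt (r x : ℝ) : ℝ :=
  if x ≤ 1 then ((r - 1) / 2) * x ^ 3 else x ^ r + ((r - 3) / 2) * x

/-! For `x < 1 < y`, convexity of `t ↦ t ^ r` on `[1, 2]` gives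
`(x + y) ^ r - y ^ r ≤ (2 ^ r - 1) x y ^ (r - 1)`, so the increment of `w_r` is at most
`2 ^ (r + 1) x y ^ r`. On the same range (K1) gives `k(x, y) ≤ k_* (1 + a(y)) ^ θ`, since
`ℓ(x) ≤ 1` and the denominator is at least `y ^ m`. The integrand is thus dominated by
`2 ^ (r + 1) k_* · x ψ(x) · y ^ r (1 + a(y)) ^ θ ψ(y)`, and the double integral factorises. -/

theorem one_add_rpow_le_one_add_mul {t r : ℝ} (ht0 : 0 ≤ t) (ht1 : t ≤ 1) (hr : 1 ≤ r) :
    (1 + t) ^ r ≤ 1 + (2 ^ r - 1) * t := by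
  have h := (convexOn_rpow hr).2 (mem_Ici.2 zero_le_one) (mem_Ici.2 zero_le_two)
    (sub_nonneg.2 ht1) ht0 (sub_add_cancel 1 t)
  simp only [smul_eq_mul, one_rpow] at h
  calc (1 + t) ^ r = ((1 - t) * 1 + t * 2) ^ r := by ring_nf
    _ ≤ (1 - t) * 1 + t * 2 ^ r := h
    _ = 1 + (2 ^ r - 1) * t := by ring

theorem add_rpow_le_rpow_add_mul {x y r : ℝ} (hx : 0 ≤ x) (hxy : x ≤ y) (hr : 1 ≤ r) :
    (x + y) ^ r ≤ y ^ r + (2 ^ r - 1) * x * y ^ (r - 1) := by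
  rcases hx.eq_or_lt with rfl | hx
  · simp
  have hy : 0 < y := hx.trans_le hxy
  have hsplit : (x + y) ^ r = y ^ r * (1 + x / y) ^ r := by
    rw [← mul_rpow hy.le (by positivity)]
    congr 1
    field_simp
    ring
  calc (x + y) ^ r ≤ y ^ r * (1 + (2 ^ r - 1) * (x / y)) := by
        rw [hsplit]
        gcongr
        exact one_add_rpow_le_one_add_mul (by positivity) ((div_le_one hy).2 hxy) hr
    _ = y ^ r + (2 ^ r - 1) * x * y ^ (r - 1) := by
        rw [rpow_sub_one hy.ne']
        ring

theorem wgt_add_sub_le {r x y : ℝ} (hr : 1 ≤ r) (hx0 : 0 ≤ x) (hx1 : x ≤ 1) (hy : 1 < y) :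
    wgt r (x + y) - wgt r x - wgt r y ≤ 2 ^ (r + 1) * x * y ^ r := by
  have hy0 : 0 < y := one_pos.trans hy
  rw [wgt, wgt, wgt, if_neg (by linarith), if_pos hx1, if_neg hy.not_ge]
  have hbernoulli : 1 + r ≤ 2 ^ r := by
    simpa [one_add_one_eq_two] using
      one_add_mul_self_le_rpow_one_add (s := 1) (by norm_num) hr
  have hc : 0 ≤ (2 ^ r - 1) * x := mul_nonneg (by linarith) hx0
  have hpow : (x + y) ^ r ≤ y ^ r + (2 ^ r - 1) * x * y ^ r := by
    refine (add_rpow_le_rpow_add_mul hx0 (hx1.trans hy.le) hr).trans ?_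
    gcongr
    · exact hy.le
    · linarith
  have hlin : (r - 3) / 2 * x ≤ (2 ^ r - 1) * x * y ^ r :=
    calc (r - 3) / 2 * x ≤ (2 ^ r - 1) * x := by gcongr; linarith
      _ ≤ (2 ^ r - 1) * x * y ^ r := le_mul_of_one_le_right hc (one_le_rpow hy.le (by linarith))
  have hxy : 0 ≤ x * y ^ r := by positivity
  have hcube : 0 ≤ (r - 1) / 2 * x ^ 3 := by
    have : 0 ≤ r - 1 := by linarith
    positivity
  rw [rpow_add two_pos, rpow_one]
  linarith

theorem ell_le_one {a : ℝ → ℝ} {θ₀ θ m x : ℝ} (hθ₀ : θ₀ ≤ 1 / 2) (hx0 : 0 ≤ x) (hx1 : x < 1) :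
    ell a θ₀ θ m x ≤ 1 := by
  rw [ell, if_pos hx1]
  exact rpow_le_one hx0 hx1.le (by linarith)

theorem ell_of_one_le {a : ℝ → ℝ} {θ₀ θ m y : ℝ} (hy : 1 ≤ y) :
    ell a θ₀ θ m y = (1 + a y) ^ θ * y ^ m := by
  rw [ell, if_neg hy.not_gt]

theorem le_mul_rpow_of_le_ell_mul_ell {a : ℝ → ℝ} {θ₀ θ m kstar x y κ : ℝ}
    (hθ₀ : θ₀ ≤ 1 / 2) (hm : 0 ≤ m) (hkstar : 0 ≤ kstar) (hx0 : 0 < x) (hx1 : x < 1) (hy : 1 ≤ y)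
    (ha : 0 ≤ a y)
    (hκ : κ ≤ kstar * ell a θ₀ θ m x * ell a θ₀ θ m y / (x + y + (x + y) ^ m)) :
    κ ≤ kstar * (1 + a y) ^ θ := by
  have hy0 : 0 < y := one_pos.trans_le hy
  have hym : 0 < y ^ m := rpow_pos_of_pos hy0 m
  have hden : y ^ m ≤ x + y + (x + y) ^ m := by
    have : y ^ m ≤ (x + y) ^ m := by gcongr; linarith
    linarith
  calc κ ≤ kstar * ell a θ₀ θ m x * ell a θ₀ θ m y / (x + y + (x + y) ^ m) := hκ
    _ ≤ kstar * 1 * ((1 + a y) ^ θ * y ^ m) / y ^ m := by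
        rw [ell_of_one_le hy]
        gcongr
        exact ell_le_one hθ₀ hx0.le hx1
    _ = kstar * (1 + a y) ^ θ := by field_simp

theorem coag_integrand_le {a : ℝ → ℝ} {θ₀ θ m kstar r x y κ u v : ℝ}
    (hθ₀ : θ₀ ≤ 1 / 2) (hm : 0 ≤ m) (hkstar : 0 ≤ kstar) (hr : 1 ≤ r)
    (hx0 : 0 < x) (hx1 : x < 1) (hy : 1 < y) (ha : 0 ≤ a y)
    (hκ0 : 0 ≤ κ) (hκ : κ ≤ kstar * ell a θ₀ θ m x * ell a θ₀ θ m y / (x + y + (x + y) ^ m))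
    (hu : 0 ≤ u) (hv : 0 ≤ v) :
    (wgt r (x + y) - wgt r x - wgt r y) * (κ * u * v) ≤
      2 ^ (r + 1) * kstar * (x * u) * (y ^ r * (1 + a y) ^ θ * v) := by
  have hκ' := le_mul_rpow_of_le_ell_mul_ell hθ₀ hm hkstar hx0 hx1 hy.le ha hκ
  calc (wgt r (x + y) - wgt r x - wgt r y) * (κ * u * v)
      ≤ 2 ^ (r + 1) * x * y ^ r * (kstar * (1 + a y) ^ θ * u * v) := by
        gcongr
        exact wgt_add_sub_le hr hx0.le hx1.le hy
    _ = 2 ^ (r + 1) * kstar * (x * u) * (y ^ r * (1 + a y) ^ θ * v) := by ring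

theorem setLIntegral_setLIntegral_le_mul {α β : Type*} [MeasurableSpace α] [MeasurableSpace β]
    {μ : Measure α} {ν : Measure β} {s : Set α} {t : Set β} {F : α → β → ℝ≥0∞}
    {f : α → ℝ≥0∞} {g : β → ℝ≥0∞} (c : ℝ≥0∞) (hs : MeasurableSet s) (ht : MeasurableSet t)
    (hf : Measurable f) (hg : Measurable g) (hF : ∀ x ∈ s, ∀ y ∈ t, F x y ≤ c * f x * g y) :
    ∫⁻ x in s, ∫⁻ y in t, F x y ∂ν ∂μ ≤ c * (∫⁻ x in s, f x ∂μ) * ∫⁻ y in t, g y ∂ν :=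
  calc ∫⁻ x in s, ∫⁻ y in t, F x y ∂ν ∂μ ≤ ∫⁻ x in s, c * f x * ∫⁻ y in t, g y ∂ν ∂μ :=
        setLIntegral_mono' hs fun x hx =>
          (setLIntegral_mono' ht (hF x hx)).trans_eq (lintegral_const_mul _ hg)
    _ = c * (∫⁻ x in s, f x ∂μ) * ∫⁻ y in t, g y ∂ν := by
        rw [lintegral_mul_const _ (hf.const_mul c), lintegral_const_mul _ hf]

theorem small_large_coag_estimate_general (a : ℝ → ℝ) (θ₀ θ m kstar r : ℝ)
    (k : ℝ → ℝ → ℝ) (ψ : ℝ → ℝ)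
    (hθ₀ : θ₀ ≤ 1 / 2) (hm : 1 < m)
    (ha : Measurable a) (ha0 : ∀ x ∈ Ioi (0 : ℝ), 0 ≤ a x)
    (hknn : ∀ x y : ℝ, 0 < x → 0 < y → 0 ≤ k x y)
    (hkstar : 0 < kstar)
    (hK1 : ∀ x y : ℝ, 0 < x → 0 < y →
      k x y ≤ kstar * ell a θ₀ θ m x * ell a θ₀ θ m y / (x + y + (x + y) ^ m))
    (hr1 : 1 < r)
    (hψm : Measurable ψ) (hψ0 : ∀ x ∈ Ioi (0 : ℝ), 0 ≤ ψ x) :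
    (∫⁻ x in Ioo (0 : ℝ) 1, ∫⁻ y in Ioi (1 : ℝ),
        ENNReal.ofReal ((wgt r (x + y) - wgt r x - wgt r y) * (k x y * ψ x * ψ y))) ≤
      ENNReal.ofReal ((2 : ℝ) ^ (r + 2) * kstar) *
        (∫⁻ x in Ioi (0 : ℝ), ENNReal.ofReal (x * ψ x)) *
        ∫⁻ y in Ioi (1 : ℝ), ENNReal.ofReal (y ^ r * (1 + a y) ^ θ * ψ y) := by
  have hmoment : Measurable fun x : ℝ => ENNReal.ofReal (x * ψ x) := by fun_prop
  have hlarge : Measurable fun y : ℝ => ENNReal.ofReal (y ^ r * (1 + a y) ^ θ * ψ y) := by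
    fun_prop
  calc _ ≤ ENNReal.ofReal (2 ^ (r + 1) * kstar) *
          (∫⁻ x in Ioo (0 : ℝ) 1, ENNReal.ofReal (x * ψ x)) *
          ∫⁻ y in Ioi (1 : ℝ), ENNReal.ofReal (y ^ r * (1 + a y) ^ θ * ψ y) := by
        refine setLIntegral_setLIntegral_le_mul _ measurableSet_Ioo measurableSet_Ioi
          hmoment hlarge fun x ⟨hx0, hx1⟩ y (hy : 1 < y) => ?_
        have hy0 : 0 < y := one_pos.trans hy
        have hψx := hψ0 x hx0
        rw [← ENNReal.ofReal_mul (by positivity), ← ENNReal.ofReal_mul (by positivity)]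
        exact ENNReal.ofReal_le_ofReal <| coag_integrand_le hθ₀ (by linarith) hkstar.le hr1.le
          hx0 hx1 hy (ha0 y hy0) (hknn x y hx0 hy0) (hK1 x y hx0 hy0) hψx (hψ0 y hy0)
    _ ≤ _ := by
        gcongr
        exacts [one_le_two, one_le_two, Ioo_subset_Ioi_self]

/-- under (K1) with `θ₀ ∈ [0,1/2]`, for every `r ∈ (1,m]` and `ψ ≥ 0`,
`∫₀¹∫₁^∞ [w_r(x+y) − w_r(x) − w_r(y)] k(x,y)ψ(x)ψ(y) dy dx ≤
  2^{r+2} k_* M₁(ψ) ∫₁^∞ y^r (1+a(y))^θ ψ(y) dy`. -/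
theorem small_large_coag_estimate (a : ℝ → ℝ) (θ₀ θ m kstar r : ℝ)
    (k : ℝ → ℝ → ℝ) (ψ : ℝ → ℝ)
    (hθ₀0 : 0 ≤ θ₀) (hθ₀ : θ₀ ≤ 1 / 2) (hθ₀θ : θ₀ < θ) (hθ : θ ≤ 1) (hm : 1 < m)
    (ha : Measurable a) (ha0 : ∀ x ∈ Ioi (0 : ℝ), 0 ≤ a x)
    (hkm : Measurable (Function.uncurry k))
    (hksym : ∀ x y : ℝ, 0 < x → 0 < y → k x y = k y x)
    (hknn : ∀ x y : ℝ, 0 < x → 0 < y → 0 ≤ k x y)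
    (hkstar : 0 < kstar)
    (hK1 : ∀ x y : ℝ, 0 < x → 0 < y →
      k x y ≤ kstar * ell a θ₀ θ m x * ell a θ₀ θ m y / (x + y + (x + y) ^ m))
    (hr1 : 1 < r) (hrm : r ≤ m)
    (hψm : Measurable ψ) (hψ0 : ∀ x ∈ Ioi (0 : ℝ), 0 ≤ ψ x) :
    (∫⁻ x in Ioo (0 : ℝ) 1, ∫⁻ y in Ioi (1 : ℝ),
        ENNReal.ofReal ((wgt r (x + y) - wgt r x - wgt r y) * (k x y * ψ x * ψ y))) ≤
      ENNReal.ofReal ((2 : ℝ) ^ (r + 2) * kstar) *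
        (∫⁻ x in Ioi (0 : ℝ), ENNReal.ofReal (x * ψ x)) *
        ∫⁻ y in Ioi (1 : ℝ), ENNReal.ofReal (y ^ r * (1 + a y) ^ θ * ψ y) :=
  small_large_coag_estimate_general a θ₀ θ m kstar r k ψ hθ₀ hm ha ha0 hknn hkstar hK1 hr1 hψm hψ0
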